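/- Let A be positive semidefinite and T an operator admitting an A-adjoint T^♯. Then dw_A(T)² ≥ 2·max{ w_A(T)·c_A(T^♯T), c_A(T)·‖T‖_A² }. -/

import Mathlib

noncomputable section

namespace DW

variable {H : Type*} [NormedAddCommGroup H] [InnerProductSpace ℂ H]

/-- The semi-inner product induced by `A`: `⟨x,y⟩_A = ⟨Ax, y⟩`. -/
def innA (A : H →L[ℂ] H) (x y : H) : ℂ := inner ℂ (A x) y

/-- The seminorm induced by `A`. -/
def normA (A : H →L[ℂ] H) (x : H) : ℝ := Real.sqrt (innA A x x).re

/-- `T` is `A`-bounded. -/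
def IsABounded (A T : H →L[ℂ] H) : Prop := ∃ c > 0, ∀ x, normA A (T x) ≤ c * normA A x

/-- `S` is an `A`-adjoint of `T`. -/
def IsAAdjointPair (A T S : H →L[ℂ] H) : Prop := ∀ x y, innA A (T x) y = innA A x (S y)

/-- The `A`-operator seminorm. -/
def opNormA (A T : H →L[ℂ] H) : ℝ := sSup {r | ∃ x, normA A x = 1 ∧ r = normA A (T x)}

/-- The `A`-minimum modulus. -/
def mA (A T : H →L[ℂ] H) : ℝ := sInf {r | ∃ x, normA A x = 1 ∧ r = normA A (T x)}

/-- The `A`-numerical radius. -/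
def wA (A T : H →L[ℂ] H) : ℝ :=
  sSup {r | ∃ x, normA A x = 1 ∧ r = ‖innA A (T x) x‖}

/-- The `A`-Crawford number. -/
def cA (A T : H →L[ℂ] H) : ℝ :=
  sInf {r | ∃ x, normA A x = 1 ∧ r = ‖innA A (T x) x‖}

/-- The `A`-Davis-Wielandt radius. -/
def dwA (A T : H →L[ℂ] H) : ℝ :=
  sSup {r | ∃ x, normA A x = 1 ∧
    r = Real.sqrt (‖innA A (T x) x‖ ^ 2 + normA A (T x) ^ 4)}

/-- The semi-inner product on `H ⊕ H` induced by `𝔸 = diag(A,A)`. -/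
def innA2 (A : H →L[ℂ] H) (z w : H × H) : ℂ := innA A z.1 w.1 + innA A z.2 w.2

/-- The seminorm on `H ⊕ H` induced by `𝔸 = diag(A,A)`. -/
def normA2 (A : H →L[ℂ] H) (z : H × H) : ℝ := Real.sqrt (innA2 A z z).re

/-- The `𝔸`-numerical radius on `H ⊕ H`, `𝔸 = diag(A,A)`. -/
def wA2 (A : H →L[ℂ] H) (T : H × H →L[ℂ] H × H) : ℝ :=
  sSup {r | ∃ z, normA2 A z = 1 ∧ r = ‖innA2 A (T z) z‖}

/-- The `𝔸`-Davis-Wielandt radius on `H ⊕ H`, `𝔸 = diag(A,A)`. -/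
def dwA2 (A : H →L[ℂ] H) (T : H × H →L[ℂ] H × H) : ℝ :=
  sSup {r | ∃ z, normA2 A z = 1 ∧
    r = Real.sqrt (‖innA2 A (T z) z‖ ^ 2 + normA2 A (T z) ^ 4)}

/-- The block operator `[[0, X], [Y, 0]]` on `H ⊕ H`. -/
def offDiag (X Y : H →L[ℂ] H) : H × H →L[ℂ] H × H :=
  (X.comp (ContinuousLinearMap.snd ℂ H H)).prod (Y.comp (ContinuousLinearMap.fst ℂ H H))

end DW

/-!
Every `A`-unit vector `x` satisfies `2 |⟨Tx,x⟩_A| ‖Tx‖_A² ≤ |⟨Tx,x⟩_A|² + ‖Tx‖_A⁴ ≤ dw_A(T)²`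
by AM-GM. Bounding `‖Tx‖_A² = |⟨T^♯Tx,x⟩_A|` below by `c_A(T^♯T)`, resp. `|⟨Tx,x⟩_A|` below by
`c_A(T)`, and passing to the supremum over `x` gives both bounds.

The suprema are only meaningful because `T` is `A`-bounded: the `A`-selfadjoint operator
`S = T^♯T` satisfies `‖Sx‖_A^(2^n) ≤ ‖S^(2^n)x‖_A ≤ √‖A‖ ‖x‖ ‖S‖^(2^n)` for `‖x‖_A = 1`,
whence `‖Sx‖_A ≤ ‖S‖` and `‖Tx‖_A² ≤ ‖S‖`.
-/

theorem le_of_forall_pow_two_pow_le_const_mul {a b C : ℝ} (hb : 0 ≤ b)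
    (h : ∀ n : ℕ, a ^ 2 ^ n ≤ C * b ^ 2 ^ n) : a ≤ b := by
  by_contra! hba
  have ha : 0 < a := hb.trans_lt hba
  have hlim : Filter.Tendsto (fun n : ℕ => C * (b / a) ^ 2 ^ n) Filter.atTop (nhds 0) := by
    simpa using ((tendsto_pow_atTop_nhds_zero_of_lt_one (div_nonneg hb ha.le)
      ((div_lt_one ha).2 hba)).comp (tendsto_pow_atTop_atTop_of_one_lt one_lt_two)).const_mul C
  obtain ⟨n, hn⟩ := (hlim.eventually (gt_mem_nhds one_pos)).exists
  have hlt : C * b ^ 2 ^ n < a ^ 2 ^ n := by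
    rwa [div_pow, ← mul_div_assoc, div_lt_one (pow_pos ha _)] at hn
  exact (h n).not_gt hlt

theorem map_sSup_le_of_continuous {s : Set ℝ} (hs : BddAbove s) {g : ℝ → ℝ} (hg : Continuous g)
    {D : ℝ} (h0 : g 0 ≤ D) (h : ∀ r ∈ s, g r ≤ D) : g (sSup s) ≤ D := by
  rcases s.eq_empty_or_nonempty with rfl | hne
  · rwa [Real.sSup_empty]
  · exact closure_minimal h (isClosed_le hg continuous_const) (csSup_mem_closure hne hs)

namespace DW

variable {H : Type*} [NormedAddCommGroup H] [InnerProductSpace ℂ H] {A : H →L[ℂ] H}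

theorem innA_conj_symm (hA : A.IsPositive) (x y : H) :
    starRingEnd ℂ (innA A y x) = innA A x y := by
  rw [innA, inner_conj_symm, innA, hA.inner_left_eq_inner_right]

theorem normA_nonneg (x : H) : 0 ≤ normA A x := Real.sqrt_nonneg _

theorem re_innA_self_nonneg (hA : A.IsPositive) (x : H) : 0 ≤ (innA A x x).re :=
  hA.re_inner_nonneg_left x

/-- `⟨·,·⟩_A` as a pre-inner product, to borrow Cauchy–Schwarz from `InnerProductSpace.Core`. -/
abbrev preInnerProductCoreA (hA : A.IsPositive) : PreInnerProductSpace.Core ℂ H where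
  inner := innA A
  conj_inner_symm x y := innA_conj_symm hA x y
  re_inner_nonneg := re_innA_self_nonneg hA
  add_left x y z := by simp [innA]
  smul_left x y r := by simp [innA, mul_comm]

theorem norm_innA_le (hA : A.IsPositive) (x y : H) : ‖innA A x y‖ ≤ normA A x * normA A y :=
  @InnerProductSpace.Core.norm_inner_le_norm ℂ H _ _ _ (preInnerProductCoreA hA) x y

theorem re_innA_le (hA : A.IsPositive) (x y : H) : (innA A x y).re ≤ normA A x * normA A y :=
  (Complex.re_le_norm _).trans (norm_innA_le hA x y)

theorem normA_sq (hA : A.IsPositive) (x : H) : normA A x ^ 2 = (innA A x x).re :=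
  Real.sq_sqrt (re_innA_self_nonneg hA x)

theorem norm_innA_self (hA : A.IsPositive) (x : H) : ‖innA A x x‖ = normA A x ^ 2 := by
  have hreal : ((innA A x x).re : ℂ) = innA A x x :=
    Complex.conj_eq_iff_re.1 (innA_conj_symm hA x x)
  rw [← hreal, Complex.norm_of_nonneg (re_innA_self_nonneg hA x), normA_sq hA]

theorem normA_le_sqrt_norm_mul_norm (x : H) : normA A x ≤ √‖A‖ * ‖x‖ := by
  rw [← Real.sqrt_sq (norm_nonneg x), ← Real.sqrt_mul (norm_nonneg A)]
  refine Real.sqrt_le_sqrt ((Complex.re_le_norm _).trans ?_)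
  calc ‖innA A x x‖ ≤ ‖A x‖ * ‖x‖ := norm_inner_le_norm _ _
    _ ≤ ‖A‖ * ‖x‖ * ‖x‖ := by gcongr; exact A.le_opNorm x
    _ = ‖A‖ * ‖x‖ ^ 2 := by ring

theorem bddAbove_setOf_normA_eq_one {f : H → ℝ} {M : ℝ} (h : ∀ x, normA A x = 1 → f x ≤ M) :
    BddAbove {r | ∃ x, normA A x = 1 ∧ r = f x} :=
  ⟨M, by rintro _ ⟨x, hx, rfl⟩; exact h x hx⟩

theorem cA_le {T : H →L[ℂ] H} {x : H} (hx : normA A x = 1) : cA A T ≤ ‖innA A (T x) x‖ :=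
  csInf_le ⟨0, by rintro _ ⟨y, -, rfl⟩; exact norm_nonneg _⟩ ⟨x, hx, rfl⟩

namespace IsAAdjointPair

theorem symm (hA : A.IsPositive) {T S : H →L[ℂ] H} (h : IsAAdjointPair A T S) :
    IsAAdjointPair A S T := fun x y => by
  rw [← innA_conj_symm hA (S x) y, ← h, innA_conj_symm hA]

theorem comp {T T' S S' : H →L[ℂ] H} (hT : IsAAdjointPair A T T') (hS : IsAAdjointPair A S S') :
    IsAAdjointPair A (S.comp T) (T'.comp S') := fun x y => by
  rw [ContinuousLinearMap.comp_apply, hS, hT, ContinuousLinearMap.comp_apply]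

theorem pow {S : H →L[ℂ] H} (hS : IsAAdjointPair A S S) (k : ℕ) :
    IsAAdjointPair A (S ^ k) (S ^ k) := by
  induction k with
  | zero => exact fun x y => rfl
  | succ k ih =>
    have h := hS.comp ih
    rwa [← ContinuousLinearMap.mul_def, ← ContinuousLinearMap.mul_def, ← pow_succ,
      ← pow_succ'] at h

section SelfAdjoint

variable {S : H →L[ℂ] H}

theorem normA_apply_sq_le (hA : A.IsPositive) (hS : IsAAdjointPair A S S) (x : H) :
    normA A (S x) ^ 2 ≤ normA A x * normA A (S (S x)) := by
  rw [normA_sq hA, hS]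
  exact re_innA_le hA _ _

theorem normA_apply_pow_two_pow_le (hA : A.IsPositive) (hS : IsAAdjointPair A S S) {x : H}
    (hx : normA A x = 1) (n : ℕ) : normA A (S x) ^ 2 ^ n ≤ normA A ((S ^ 2 ^ n) x) := by
  induction n with
  | zero => simp
  | succ n ih =>
    calc normA A (S x) ^ 2 ^ (n + 1) = (normA A (S x) ^ 2 ^ n) ^ 2 := by rw [pow_succ, pow_mul]
      _ ≤ normA A ((S ^ 2 ^ n) x) ^ 2 := by gcongr; exact pow_nonneg (normA_nonneg _) _
      _ ≤ normA A x * normA A ((S ^ 2 ^ n) ((S ^ 2 ^ n) x)) := (hS.pow _).normA_apply_sq_le hA x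
      _ = normA A ((S ^ 2 ^ (n + 1)) x) := by rw [hx, one_mul, pow_succ, pow_mul, sq]; rfl

theorem normA_apply_le_norm (hA : A.IsPositive) (hS : IsAAdjointPair A S S) {x : H}
    (hx : normA A x = 1) : normA A (S x) ≤ ‖S‖ :=
  le_of_forall_pow_two_pow_le_const_mul (C := √‖A‖ * ‖x‖) (norm_nonneg S) fun n =>
    calc normA A (S x) ^ 2 ^ n ≤ normA A ((S ^ 2 ^ n) x) := hS.normA_apply_pow_two_pow_le hA hx n
      _ ≤ √‖A‖ * ‖(S ^ 2 ^ n) x‖ := normA_le_sqrt_norm_mul_norm _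
      _ ≤ √‖A‖ * (‖S‖ ^ 2 ^ n * ‖x‖) := by
        gcongr
        exact ((S ^ 2 ^ n).le_opNorm x).trans (by gcongr; exact norm_pow_le' S (by positivity))
      _ = √‖A‖ * ‖x‖ * ‖S‖ ^ 2 ^ n := by ring

end SelfAdjoint

variable {T T' : H →L[ℂ] H}

theorem norm_innA_comp_apply_self (hA : A.IsPositive) (hT : IsAAdjointPair A T T') (x : H) :
    ‖innA A ((T'.comp T) x) x‖ = normA A (T x) ^ 2 := by
  rw [ContinuousLinearMap.comp_apply, hT.symm hA, norm_innA_self hA]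

theorem normA_apply_le (hA : A.IsPositive) (hT : IsAAdjointPair A T T') {x : H}
    (hx : normA A x = 1) : normA A (T x) ≤ √‖T'.comp T‖ := by
  refine Real.le_sqrt_of_sq_le ?_
  calc normA A (T x) ^ 2 ≤ normA A x * normA A ((T'.comp T) x) := by
        rw [normA_sq hA, hT]; exact re_innA_le hA _ _
    _ ≤ ‖T'.comp T‖ := by
        rw [hx, one_mul]; exact (hT.comp (hT.symm hA)).normA_apply_le_norm hA hx

theorem norm_innA_apply_le (hA : A.IsPositive) (hT : IsAAdjointPair A T T') {x : H}
    (hx : normA A x = 1) : ‖innA A (T x) x‖ ≤ √‖T'.comp T‖ :=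
  calc ‖innA A (T x) x‖ ≤ normA A (T x) * normA A x := norm_innA_le hA _ _
    _ ≤ √‖T'.comp T‖ := by rw [hx, mul_one]; exact hT.normA_apply_le hA hx

theorem le_dwA_sq (hA : A.IsPositive) (hT : IsAAdjointPair A T T') {x : H}
    (hx : normA A x = 1) : ‖innA A (T x) x‖ ^ 2 + normA A (T x) ^ 4 ≤ dwA A T ^ 2 := by
  have hbdd := bddAbove_setOf_normA_eq_one (A := A)
    (f := fun x => √(‖innA A (T x) x‖ ^ 2 + normA A (T x) ^ 4))
    (M := √(√‖T'.comp T‖ ^ 2 + √‖T'.comp T‖ ^ 4)) fun y hy => by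
      have := normA_nonneg (A := A) (T y)
      gcongr
      exacts [hT.norm_innA_apply_le hA hy, hT.normA_apply_le hA hy]
  rw [← Real.sq_sqrt (by positivity : 0 ≤ ‖innA A (T x) x‖ ^ 2 + normA A (T x) ^ 4)]
  gcongr
  exact le_csSup hbdd ⟨x, hx, rfl⟩

end IsAAdjointPair

end DW

open DW

variable {H : Type*} [NormedAddCommGroup H] [InnerProductSpace ℂ H] [CompleteSpace H]

theorem stmt5 (A T T' : H →L[ℂ] H) (hA : A.IsPositive) (hT' : IsAAdjointPair A T T') :
    2 * max (wA A T * cA A (T'.comp T)) (cA A T * opNormA A T ^ 2) ≤ dwA A T ^ 2 := by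
  set S := T'.comp T
  have hamgm : ∀ x, normA A x = 1 → 2 * ‖innA A (T x) x‖ * normA A (T x) ^ 2 ≤ dwA A T ^ 2 :=
    fun x hx => by
      nlinarith [hT'.le_dwA_sq hA hx, sq_nonneg (‖innA A (T x) x‖ - normA A (T x) ^ 2)]
  have hw : wA A T * cA A S ≤ dwA A T ^ 2 / 2 := by
    refine map_sSup_le_of_continuous (g := (· * cA A S))
      (bddAbove_setOf_normA_eq_one fun x hx => hT'.norm_innA_apply_le hA hx) (by fun_prop)
      (by simp only [zero_mul]; positivity) ?_
    rintro _ ⟨x, hx, rfl⟩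
    have hcS : cA A S ≤ normA A (T x) ^ 2 :=
      (cA_le hx).trans_eq (hT'.norm_innA_comp_apply_self hA x)
    nlinarith [hamgm x hx, norm_nonneg (innA A (T x) x)]
  have hc : cA A T * opNormA A T ^ 2 ≤ dwA A T ^ 2 / 2 := by
    refine map_sSup_le_of_continuous (g := (cA A T * · ^ 2))
      (bddAbove_setOf_normA_eq_one fun x hx => hT'.normA_apply_le hA hx) (by fun_prop)
      (by simp only [zero_pow two_ne_zero, mul_zero]; positivity) ?_
    rintro _ ⟨x, hx, rfl⟩
    nlinarith [hamgm x hx, cA_le (T := T) hx, sq_nonneg (normA A (T x))]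
  linarith [max_le hw hc]
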